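/- Applying independent randomized response with flip probability p = 1/(1+e^{ε/(2nk)}) to each bit of a length-l Bloom filter yields an ε-differentially private mechanism, where any two records produce Bloom filters differing in at most 2nk bit positions: for any two bit vectors v, v' ∈ {0,1}^l with Hamming distance at most 2nk and any output vector w, Pr[A(v)=w] ≤ e^ε·Pr[A(v')=w]. -/
import Mathlib


/-- Independent per-bit randomized response with flip probability
`1/(1+e^(ε/(2nk)))` applied to length-`l` Bloom filters is
`ε`-differentially private for vectors at Hamming distance at most `2nk`. -/
theorem blip_bloom_filter_dp (l n k : ℕ) (hl : 0 < l) (hn : 0 < n) (hk : 0 < k)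
    (hnk : 2 * n * k ≤ l) (ε : ℝ) (hε : 0 < ε)
    (P : Bool → Bool → ℝ)
    (hP : ∀ b o : Bool, P b o =
      if b = o then Real.exp (ε / (2 * n * k)) / (1 + Real.exp (ε / (2 * n * k)))
      else 1 / (1 + Real.exp (ε / (2 * n * k))))
    (v v' : Fin l → Bool)
    (hdist : (Finset.univ.filter (fun i => v i ≠ v' i)).card ≤ 2 * n * k) :
    ∀ w : Fin l → Bool,
      ∏ i, P (v i) (w i) ≤ Real.exp ε * ∏ i, P (v' i) (w i) := by
  intro w
  have hnk' : (0:ℝ) < 2 * n * k := by positivity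
  set c : ℝ := ε / (2 * n * k) with hc
  have hcpos : 0 < c := div_pos hε hnk'
  set E : ℝ := Real.exp c with hE
  have hEpos : 0 < E := Real.exp_pos c
  have hE1 : 1 < E := by
    rw [hE]
    calc (1:ℝ) = Real.exp 0 := Real.exp_zero.symm
    _ < Real.exp c := Real.exp_lt_exp.mpr hcpos
  have hden : (0:ℝ) < 1 + E := by linarith
  have hPpos : ∀ b o : Bool, 0 < P b o := by
    intro b o
    rw [hP]
    split_ifs <;> positivity
  have key : ∀ i, P (v i) (w i) ≤ (if v i = v' i then 1 else E) * P (v' i) (w i) := by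
    intro i
    by_cases h : v i = v' i
    · simp [h]
    · simp only [if_neg h]
      by_cases hw : v i = w i
      · have h2 : v' i ≠ w i := by
          cases hvv : v i <;> cases hv' : v' i <;> cases hww : w i <;> simp_all
        rw [hP, hP, if_pos hw, if_neg h2, mul_one_div]
      · have h2 : v' i = w i := by
          cases hvv : v i <;> cases hv' : v' i <;> cases hww : w i <;> simp_all
        rw [hP, hP, if_neg hw, if_pos h2, mul_div_assoc']
        gcongr
        nlinarith
  have hcard : ((Finset.univ.filter (fun i => v i ≠ v' i)).card : ℝ) ≤ 2 * n * k := by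
    exact_mod_cast hdist
  calc ∏ i, P (v i) (w i)
      ≤ ∏ i, (if v i = v' i then 1 else E) * P (v' i) (w i) :=
        Finset.prod_le_prod (fun i _ => (hPpos _ _).le) (fun i _ => key i)
    _ = (∏ i, if v i = v' i then 1 else E) * ∏ i, P (v' i) (w i) :=
        Finset.prod_mul_distrib
    _ = E ^ (Finset.univ.filter (fun i => v i ≠ v' i)).card * ∏ i, P (v' i) (w i) := by
        congr 1
        rw [Finset.prod_ite, Finset.prod_const_one, Finset.prod_const, one_mul]
    _ ≤ Real.exp ε * ∏ i, P (v' i) (w i) := by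
        apply mul_le_mul_of_nonneg_right _ (Finset.prod_nonneg fun i _ => (hPpos _ _).le)
        rw [hE, ← Real.exp_nat_mul, Real.exp_le_exp]
        calc ((Finset.univ.filter (fun i => v i ≠ v' i)).card : ℝ) * c
            ≤ (2 * n * k) * c := by
              apply mul_le_mul_of_nonneg_right hcard hcpos.le
          _ = ε := by rw [hc]; field_simp
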